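/- arXiv:1708.06255 — 3 statements merged into one kernel-verified Lean document; each statement's English description precedes it below -/
import Mathlib

section
/- Let $u = (u^0, u^1, u^2, u^3) \in \mathbb{R}^4$ satisfy $-(u^0)^2 + (u^1)^2 + (u^2)^2 + (u^3)^2 = -1$ with $u^0 > 0$, and let $a_2 \geq 3$. Then for every nonzero $\underline{\xi} = (\xi_1, \xi_2, \xi_3) \in \mathbb{R}^3$, the quadratic equation in $\xi_0$ given by $(a_2 - 1)(u^0 \xi_0 + u^1 \xi_1 + u^2 \xi_2 + u^3 \xi_3)^2 - (-\xi_0^2 + \xi_1^2 + \xi_2^2 + \xi_3^2) = 0$ has two distinct real roots. -/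
/-!
Writing `b = u⃗ · ξ⃗` and `s = |ξ⃗|²`, the equation is the quadratic
`((a₂-1) u₀² + 1) ξ₀² + 2 (a₂-1) u₀ b ξ₀ + ((a₂-1) b² - s) = 0`, whose discriminant is
`4 ((a₂-1)(u₀² s - b²) + s)`. Cauchy–Schwarz and the normalization of `u` give
`b² ≤ |u⃗|² s ≤ u₀² s`, so, as `a₂ - 1 ≥ 0`, the discriminant is at least `4 s > 0`.
-/

theorem exists_ne_quadratic_eq_zero {K : Type*} [Field K] [NeZero (2 : K)] {a b c s : K}
    (ha : a ≠ 0) (hs : s ≠ 0) (h : discrim a b c = s * s) :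
    ∃ x y, x ≠ y ∧ a * (x * x) + b * x + c = 0 ∧ a * (y * y) + b * y + c = 0 := by
  refine ⟨(-b + s) / (2 * a), (-b - s) / (2 * a), ?_,
    (quadratic_eq_zero_iff ha h _).2 (.inl rfl), (quadratic_eq_zero_iff ha h _).2 (.inr rfl)⟩
  rw [Ne, div_left_inj' (mul_ne_zero two_ne_zero ha)]
  intro heq
  have h2s : 2 * s = 0 := by linear_combination heq
  exact hs ((mul_eq_zero.1 h2s).resolve_left two_ne_zero)

theorem sq_dot_le_three (u1 u2 u3 x1 x2 x3 : ℝ) :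
    (u1 * x1 + u2 * x2 + u3 * x3) ^ 2 ≤ (u1 ^ 2 + u2 ^ 2 + u3 ^ 2) * (x1 ^ 2 + x2 ^ 2 + x3 ^ 2) := by
  simpa [Fin.sum_univ_three] using
    Finset.sum_mul_sq_le_sq_mul_sq Finset.univ ![u1, u2, u3] ![x1, x2, x3]

theorem discrim_characteristic_pos {c u0 b s : ℝ} (hc : 0 ≤ c) (hb : b ^ 2 ≤ u0 ^ 2 * s)
    (hs : 0 < s) : 0 < discrim (c * u0 ^ 2 + 1) (2 * c * u0 * b) (c * b ^ 2 - s) := by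
  have hdiscrim : discrim (c * u0 ^ 2 + 1) (2 * c * u0 * b) (c * b ^ 2 - s)
      = 4 * (c * (u0 ^ 2 * s - b ^ 2) + s) := by
    rw [discrim]; ring
  rw [hdiscrim]
  nlinarith [mul_nonneg hc (sub_nonneg.2 hb)]

theorem stmt0_hyperbolicity_p2_general
    (u0 u1 u2 u3 a2 : ℝ)
    (hu : -(u0 ^ 2) + u1 ^ 2 + u2 ^ 2 + u3 ^ 2 = -1)
    (ha2 : 3 ≤ a2)
    (ξ1 ξ2 ξ3 : ℝ) (hξ : ¬(ξ1 = 0 ∧ ξ2 = 0 ∧ ξ3 = 0)) :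
    ∃ x y : ℝ, x ≠ y ∧
      ((a2 - 1) * (u0 * x + u1 * ξ1 + u2 * ξ2 + u3 * ξ3) ^ 2
        - (-(x ^ 2) + ξ1 ^ 2 + ξ2 ^ 2 + ξ3 ^ 2) = 0) ∧
      ((a2 - 1) * (u0 * y + u1 * ξ1 + u2 * ξ2 + u3 * ξ3) ^ 2
        - (-(y ^ 2) + ξ1 ^ 2 + ξ2 ^ 2 + ξ3 ^ 2) = 0) := by
  set b := u1 * ξ1 + u2 * ξ2 + u3 * ξ3
  set s := ξ1 ^ 2 + ξ2 ^ 2 + ξ3 ^ 2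
  have hs : 0 < s := by
    rcases not_and_or.1 hξ with h1 | h23
    · positivity
    rcases not_and_or.1 h23 with h2 | h3 <;> positivity
  have hb : b ^ 2 ≤ u0 ^ 2 * s := by
    nlinarith [sq_dot_le_three u1 u2 u3 ξ1 ξ2 ξ3]
  have hc : 0 ≤ a2 - 1 := by linarith
  have hD := discrim_characteristic_pos hc hb hs
  obtain ⟨x, y, hxy, hx, hy⟩ := exists_ne_quadratic_eq_zero (by positivity)
    (Real.sqrt_pos.2 hD).ne' (Real.mul_self_sqrt hD.le).symm
  exact ⟨x, y, hxy, by linear_combination hx, by linear_combination hy⟩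

/-- Hyperbolicity of the characteristic polynomial
`p̃₂(ξ) = (a₂ - 1) (uᵘ ξᵤ)² - ξᵘ ξᵤ` in the direction ξ₀: for a normalized
timelike four-vector `u` (Minkowski signature (-,+,+,+)) and `a₂ ≥ 3`, for each
nonzero spatial covector `(ξ₁,ξ₂,ξ₃)` the quadratic equation in `ξ₀` has two
distinct real roots. -/
theorem stmt0_hyperbolicity_p2
    (u0 u1 u2 u3 a2 : ℝ)
    (hu : -(u0 ^ 2) + u1 ^ 2 + u2 ^ 2 + u3 ^ 2 = -1)
    (hu0 : 0 < u0) (ha2 : 3 ≤ a2)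
    (ξ1 ξ2 ξ3 : ℝ) (hξ : ¬(ξ1 = 0 ∧ ξ2 = 0 ∧ ξ3 = 0)) :
    ∃ x y : ℝ, x ≠ y ∧
      ((a2 - 1) * (u0 * x + u1 * ξ1 + u2 * ξ2 + u3 * ξ3) ^ 2
        - (-(x ^ 2) + ξ1 ^ 2 + ξ2 ^ 2 + ξ3 ^ 2) = 0) ∧
      ((a2 - 1) * (u0 * y + u1 * ξ1 + u2 * ξ2 + u3 * ξ3) ^ 2
        - (-(y ^ 2) + ξ1 ^ 2 + ξ2 ^ 2 + ξ3 ^ 2) = 0) :=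
  stmt0_hyperbolicity_p2_general u0 u1 u2 u3 a2 hu ha2 ξ1 ξ2 ξ3 hξ
end

section
/- Let $T: (0,\infty) \to (0,\infty)$ be twice differentiable and set $w(\tau) = \tau T(\tau)$, $f(\tau) = 1 + \tau T'(\tau)/T(\tau)$. If $T$ satisfies the second-order Bjorken equation $\tau\bar{\chi}\frac{T''}{T} + 2\tau\bar{\chi}\left(\frac{T'}{T}\right)^2 + \frac{7}{3}\bar{\chi}\frac{T'}{T} + \frac{\bar{\chi}}{9\tau} + \tau T' - \frac{4\bar{\eta}}{9\tau} + \frac{T}{3} = 0$, and $f$ can be written as a function of $w$ (i.e., $dw/d\tau \neq 0$ along the solution), then $f(w)$ satisfies the first-order equation $\bar{\chi} w f f' + 3\bar{\chi} f^2 + f(w - \frac{14}{3}\bar{\chi}) + \frac{16\bar{\chi}}{9} - \frac{4\bar{\eta}}{9} - \frac{2w}{3} = 0$. -/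
/-!
Along the solution, `w = τ T` has `dw/dτ = T f` and `f = 1 + τ T'/T` is differentiable in `τ`,
so the chain rule gives `dF/dw = (df/dτ) / (dw/dτ)`. Substituting this quotient, together with
`τ T'/T = f - 1`, turns the second-order equation for `T` into the first-order equation for `F`
after clearing the denominators `τ`, `T` and `dw/dτ`.
-/

open Filter Topology

theorem deriv_eq_div_of_comp_eventuallyEq {g w h : ℝ → ℝ} {x w' h' : ℝ}
    (hg : DifferentiableAt ℝ g (w x)) (hw : HasDerivAt w w' x) (hh : HasDerivAt h h' x)
    (hw' : w' ≠ 0) (hcomp : g ∘ w =ᶠ[𝓝 x] h) :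
    deriv g (w x) = h' / w' := by
  have hchain : HasDerivAt (g ∘ w) (deriv g (w x) * w') x := hg.hasDerivAt.comp x hw
  rw [eq_div_iff hw', ← hchain.deriv, hcomp.deriv_eq, hh.deriv]

theorem hasDerivAt_mul_self_apply {T : ℝ → ℝ} {τ : ℝ} (hT : DifferentiableAt ℝ T τ) :
    HasDerivAt (fun s => s * T s) (T τ + τ * deriv T τ) τ :=
  ((hasDerivAt_id' τ).mul hT.hasDerivAt).congr_deriv (by simp)

theorem hasDerivAt_one_add_mul_logDeriv {T : ℝ → ℝ} {τ : ℝ} (hT : DifferentiableAt ℝ T τ)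
    (hT' : DifferentiableAt ℝ (deriv T) τ) (hTne : T τ ≠ 0) :
    HasDerivAt (fun s => 1 + s * deriv T s / T s)
      (((deriv T τ + τ * deriv (deriv T) τ) * T τ - τ * deriv T τ * deriv T τ) / T τ ^ 2) τ :=
  ((((hasDerivAt_id' τ).mul hT'.hasDerivAt).div hT.hasDerivAt hTne).const_add 1).congr_deriv
    (by simp)

/-- `T₁, T₂` stand for `T'(t), T''(t)`; the last factor of the first term is
`(df/dτ) / (dw/dτ)`. -/
theorem bjorken_first_order_of_second_order {ηb χb t T T₁ T₂ : ℝ}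
    (ht : t ≠ 0) (hT : T ≠ 0) (hw : T + t * T₁ ≠ 0)
    (h : t * χb * T₂ / T + 2 * t * χb * (T₁ / T) ^ 2 + 7 / 3 * χb * (T₁ / T)
      + χb / (9 * t) + t * T₁ - 4 / 9 * ηb / t + T / 3 = 0) :
    χb * (t * T) * (1 + t * T₁ / T)
        * ((((T₁ + t * T₂) * T - t * T₁ * T₁) / T ^ 2) / (T + t * T₁))
      + 3 * χb * (1 + t * T₁ / T) ^ 2
      + (1 + t * T₁ / T) * (t * T - 14 / 3 * χb)
      + 16 * χb / 9 - 4 * ηb / 9 - 2 * (t * T) / 3 = 0 := by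
  field_simp at h
  field_simp
  linear_combination h

/-- Change of variables for Bjorken flow: if `T(τ) > 0` satisfies the
second-order Bjorken equation and `f = 1 + τ T'/T` can be written as a
function `F` of `w = τ T(τ)` (with `dw/dτ ≠ 0`), then `F` satisfies the
first-order equation
`χ̄ w F F' + 3χ̄ F² + F (w - (14/3)χ̄) + 16χ̄/9 - 4η̄/9 - 2w/3 = 0`. -/
theorem stmt11_bjorken_change_of_variables
    (ηb χb : ℝ)
    (T : ℝ → ℝ) (F : ℝ → ℝ)
    (hTpos : ∀ τ : ℝ, 0 < τ → 0 < T τ)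
    (hTdiff : ∀ τ : ℝ, 0 < τ → DifferentiableAt ℝ T τ)
    (hT'diff : ∀ τ : ℝ, 0 < τ → DifferentiableAt ℝ (deriv T) τ)
    (hFdiff : ∀ τ : ℝ, 0 < τ → DifferentiableAt ℝ F (τ * T τ))
    -- the second-order Bjorken equation for the temperature:
    (hT2 : ∀ τ : ℝ, 0 < τ →
      τ * χb * (deriv (deriv T) τ) / T τ
        + 2 * τ * χb * (deriv T τ / T τ) ^ 2
        + 7 / 3 * χb * (deriv T τ / T τ)
        + χb / (9 * τ)
        + τ * deriv T τ
        - 4 / 9 * ηb / τ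
        + T τ / 3 = 0)
    -- `f` is a function of `w`:
    (hF : ∀ τ : ℝ, 0 < τ → F (τ * T τ) = 1 + τ * deriv T τ / T τ)
    -- `dw/dτ ≠ 0` along the solution:
    (hwne : ∀ τ : ℝ, 0 < τ → deriv (fun s => s * T s) τ ≠ 0) :
    ∀ τ : ℝ, 0 < τ →
      χb * (τ * T τ) * F (τ * T τ) * deriv F (τ * T τ)
        + 3 * χb * F (τ * T τ) ^ 2
        + F (τ * T τ) * (τ * T τ - 14 / 3 * χb)
        + 16 * χb / 9 - 4 * ηb / 9 - 2 * (τ * T τ) / 3 = 0 := by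
  intro τ hτ
  have hw := hasDerivAt_mul_self_apply (hTdiff τ hτ)
  have hf := hasDerivAt_one_add_mul_logDeriv (hTdiff τ hτ) (hT'diff τ hτ) (hTpos τ hτ).ne'
  have hF_eq : (fun s => F (s * T s)) =ᶠ[𝓝 τ] fun s => 1 + s * deriv T s / T s := by
    filter_upwards [eventually_gt_nhds hτ] with s hs using hF s hs
  have hwτ : T τ + τ * deriv T τ ≠ 0 := hw.deriv ▸ hwne τ hτ
  have hF' :=
    deriv_eq_div_of_comp_eventuallyEq (w := fun s => s * T s) (hFdiff τ hτ) hw hf hwτ hF_eq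
  rw [hF τ hτ, hF']
  exact bjorken_first_order_of_second_order hτ.ne' (hTpos τ hτ).ne' hwτ (hT2 τ hτ)
end

section
/- The Navier-Stokes Gubser temperature profile $\hat{T}_{NS}(\rho) = \frac{T_0}{\cosh^{2/3}\rho} + \frac{4\bar{\eta}}{27}\frac{\sinh^3\rho}{\cosh^{2/3}\rho}\, {}_2F_1\left(\frac{3}{2},\frac{7}{6};\frac{5}{2};-\sinh^2\rho\right)$ satisfies $\lim_{\rho \to +\infty}\hat{T}_{NS}(\rho) = \frac{2\bar{\eta}}{3}$ and $\lim_{\rho \to -\infty}\hat{T}_{NS}(\rho) = -\frac{2\bar{\eta}}{3}$. In particular, for any $\bar{\eta} > 0$ and any $T_0$, there exists $\rho$ with $\hat{T}_{NS}(\rho) < 0$. -/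
/-!
Substituting `t = u / x` in the Euler integral gives
`x^b ₂F₁(a, b; c; -x) = Γ(c) / (Γ(b) Γ(c-b)) ∫₀ˣ u^(b-1) (1+u)^(-a) (1 - u/x)^(c-b-1) du`,
and for `0 < b < a`, `b + 1 ≤ c` dominated convergence turns the integral, as `x → ∞`, into
the beta integral `∫₀^∞ u^(b-1) (1+u)^(-a) du = Γ(b) Γ(a-b) / Γ(a)`. For `(a, b, c) =
(3/2, 7/6, 5/2)` this gives `x^(7/6) ₂F₁(3/2, 7/6; 5/2; -x) → Γ(5/2) Γ(1/3) / (Γ(3/2) Γ(4/3))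
= 9/2`. As `sinh³ρ / cosh^(2/3)ρ = (tanh²ρ)^(1/3) (sinh²ρ)^(7/6)` and `tanh²ρ = 1 - cosh⁻²ρ → 1`,
the viscous term tends to `(4η̄/27)(9/2) = 2η̄/3` while the `T₀` term decays. The viscous term
is odd in `ρ` and the `T₀` term even, which gives the limit `-2η̄/3` at `-∞`, and with it a
negative temperature.
-/

open Filter

/-- Gauss hypergeometric function `₂F₁(a, b; c; x)` defined by its Euler
integral representation (valid for `c > b > 0` and `x < 1`):
`₂F₁(a,b;c;x) = Γ(c)/(Γ(b)Γ(c-b)) ∫₀¹ t^{b-1} (1-t)^{c-b-1} (1-xt)^{-a} dt`. -/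
noncomputable def hyp2F1 (a b c x : ℝ) : ℝ :=
  (Real.Gamma c / (Real.Gamma b * Real.Gamma (c - b))) *
    ∫ t in (0 : ℝ)..1, t ^ (b - 1) * (1 - t) ^ (c - b - 1) * (1 - x * t) ^ (-a)

open MeasureTheory Set Topology

namespace Real

theorem integral_Ioo_rpow_mul_one_sub_rpow {p q : ℝ} (hp : 0 < p) (hq : 0 < q) :
    ∫ v in Ioo (0 : ℝ) 1, v ^ (p - 1) * (1 - v) ^ (q - 1) =
      Gamma p * Gamma q / Gamma (p + q) := by
  have hbeta := Complex.Gamma_mul_Gamma_eq_betaIntegral (s := (p : ℂ)) (t := (q : ℂ))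
    (by simpa using hp) (by simpa using hq)
  have hreal : Complex.betaIntegral p q =
      ↑(∫ v in (0 : ℝ)..1, v ^ (p - 1) * (1 - v) ^ (q - 1)) := by
    rw [Complex.betaIntegral, ← intervalIntegral.integral_ofReal]
    refine intervalIntegral.integral_congr fun v hv => ?_
    rw [uIcc_of_le zero_le_one] at hv
    simp only [Complex.ofReal_mul, Complex.ofReal_cpow hv.1,
      Complex.ofReal_cpow (sub_nonneg.2 hv.2)]
    push_cast
    rfl
  rw [hreal, ← Complex.ofReal_add, Complex.Gamma_ofReal, Complex.Gamma_ofReal,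
    Complex.Gamma_ofReal, ← Complex.ofReal_mul, ← Complex.ofReal_mul,
    Complex.ofReal_inj] at hbeta
  rw [eq_div_iff (Gamma_pos_of_pos (add_pos hp hq)).ne', hbeta,
    intervalIntegral.integral_of_le zero_le_one, integral_Ioc_eq_integral_Ioo, mul_comm]

theorem integral_Ioi_rpow_mul_one_add_rpow {p q : ℝ} (hp : 0 < p) (hq : 0 < q) :
    ∫ u in Ioi (0 : ℝ), u ^ (p - 1) * (1 + u) ^ (-(p + q)) =
      Gamma p * Gamma q / Gamma (p + q) := by
  have himage : (fun v : ℝ => v / (1 - v)) '' Ioo 0 1 = Ioi 0 := by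
    ext u
    refine ⟨?_, fun hu => ⟨u / (1 + u), ⟨?_, ?_⟩, ?_⟩⟩
    · rintro ⟨v, ⟨hv0, hv1⟩, rfl⟩
      exact div_pos hv0 (sub_pos.2 hv1)
    · exact div_pos hu (by linarith [mem_Ioi.1 hu])
    · rw [div_lt_one (by linarith [mem_Ioi.1 hu])]; linarith
    · have : (1 : ℝ) + u ≠ 0 := by linarith [mem_Ioi.1 hu]
      field_simp
      ring
  have hderiv : ∀ v ∈ Ioo (0 : ℝ) 1,
      HasDerivWithinAt (fun v : ℝ => v / (1 - v)) (((1 - v) ^ 2)⁻¹) (Ioo 0 1) v := by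
    intro v hv
    have hne : 1 - v ≠ 0 := (sub_pos.2 hv.2).ne'
    refine (((hasDerivAt_id v).div ((hasDerivAt_id v).const_sub 1) hne).congr_deriv ?_)
      |>.hasDerivWithinAt
    simp only [id]
    field_simp
    ring
  have hinj : InjOn (fun v : ℝ => v / (1 - v)) (Ioo 0 1) := by
    intro v hv w hw h
    have := (sub_pos.2 hv.2).ne'
    have := (sub_pos.2 hw.2).ne'
    field_simp at h
    linarith
  rw [← himage, integral_image_eq_integral_abs_deriv_smul measurableSet_Ioo hderiv hinj,
    ← integral_Ioo_rpow_mul_one_sub_rpow hp hq]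
  refine setIntegral_congr_fun measurableSet_Ioo fun v hv => ?_
  have hv0 : 0 < v := hv.1
  have hw : 0 < 1 - v := sub_pos.2 hv.2
  have hsum : 1 + v / (1 - v) = (1 - v)⁻¹ := by field_simp; ring
  simp only [smul_eq_mul, hsum]
  rw [abs_of_pos (by positivity), div_rpow hv0.le hw.le, inv_rpow hw.le, ← rpow_neg hw.le,
    ← rpow_neg_one, ← rpow_natCast, ← rpow_mul hw.le, div_eq_mul_inv, ← rpow_neg hw.le]
  rw [mul_left_comm, ← mul_assoc, mul_assoc, mul_assoc, ← rpow_add hw, ← rpow_add hw]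
  congr 2
  push_cast
  ring

theorem integrableOn_Ioi_rpow_mul_one_add_rpow {p q : ℝ} (hp : 0 < p) (hq : 0 < q) :
    IntegrableOn (fun u : ℝ => u ^ (p - 1) * (1 + u) ^ (-(p + q))) (Ioi 0) := by
  -- a non-integrable function has Bochner integral `0`, but this integral is positive
  by_contra h
  have hpos : 0 < Gamma p * Gamma q / Gamma (p + q) := by
    have := Gamma_pos_of_pos hp
    have := Gamma_pos_of_pos hq
    have := Gamma_pos_of_pos (add_pos hp hq)
    positivity
  rw [← integral_Ioi_rpow_mul_one_add_rpow hp hq, integral_undef h] at hpos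
  exact hpos.false

theorem tendsto_sinh_atTop : Tendsto sinh atTop atTop :=
  tendsto_atTop_mono' _ ((eventually_ge_atTop 0).mono fun _ hx => self_le_sinh_iff.2 hx) tendsto_id

theorem tendsto_cosh_atTop : Tendsto cosh atTop atTop :=
  tendsto_atTop_mono (fun x => (sinh_lt_cosh x).le) tendsto_sinh_atTop

theorem tendsto_cosh_atBot : Tendsto cosh atBot atTop := by
  simpa [Function.comp_def] using tendsto_cosh_atTop.comp tendsto_neg_atBot_atTop

theorem sinh_pow_three_div_cosh_rpow {x : ℝ} (hx : 0 ≤ x) :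
    sinh x ^ 3 / cosh x ^ ((2 : ℝ) / 3) =
      (1 - (cosh x ^ 2)⁻¹) ^ ((1 : ℝ) / 3) * (sinh x ^ 2) ^ ((7 : ℝ) / 6) := by
  have hs : 0 ≤ sinh x := sinh_nonneg_iff.2 hx
  have hc : 0 < cosh x := cosh_pos x
  have htanh : 1 - (cosh x ^ 2)⁻¹ = sinh x ^ 2 / cosh x ^ 2 := by
    rw [cosh_sq]
    field_simp
    ring
  rw [htanh, div_rpow (by positivity) (by positivity), div_mul_eq_mul_div,
    ← rpow_add' (by positivity) (by norm_num)]
  simp only [← rpow_natCast, ← rpow_mul hs, ← rpow_mul hc.le]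
  norm_num

end Real

theorem tendsto_setIntegral_Ioc_mul_one_sub_div_rpow {g : ℝ → ℝ} (hg : IntegrableOn g (Ioi 0))
    {r : ℝ} (hr : 0 ≤ r) :
    Tendsto (fun x => ∫ u in Ioc 0 x, g u * (1 - u / x) ^ r) atTop (𝓝 (∫ u in Ioi 0, g u)) := by
  have hrestrict (x : ℝ) : ∫ u in Ioc 0 x, g u * (1 - u / x) ^ r =
      ∫ u in Ioi 0, (Ioc 0 x).indicator (fun u => g u * (1 - u / x) ^ r) u := by
    rw [integral_indicator measurableSet_Ioc, Measure.restrict_restrict measurableSet_Ioc,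
      inter_eq_left.2 Ioc_subset_Ioi_self]
  simp_rw [hrestrict]
  refine tendsto_integral_filter_of_dominated_convergence (fun u => ‖g u‖) ?_ ?_ hg.norm ?_
  · refine Eventually.of_forall fun x =>
      (hg.aestronglyMeasurable.mul ?_).indicator measurableSet_Ioc
    exact (by fun_prop : Measurable fun u : ℝ => (1 - u / x) ^ r).aestronglyMeasurable
  · refine Eventually.of_forall fun x => Eventually.of_forall fun u => ?_
    by_cases hu : u ∈ Ioc 0 x
    · have hx : 0 < x := hu.1.trans_le hu.2
      have hle : u / x ≤ 1 := (div_le_one hx).2 hu.2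
      have hnonneg : 0 ≤ u / x := div_nonneg hu.1.le hx.le
      rw [indicator_of_mem hu, norm_mul, Real.norm_eq_abs (_ ^ r),
        abs_of_nonneg (Real.rpow_nonneg (by linarith) r)]
      exact mul_le_of_le_one_right (norm_nonneg _)
        (Real.rpow_le_one (by linarith) (by linarith) hr)
    · rw [indicator_of_notMem hu, norm_zero]
      exact norm_nonneg _
  · refine ae_restrict_of_forall_mem measurableSet_Ioi fun u (hu : 0 < u) => ?_
    have hfactor : Tendsto (fun x : ℝ => (1 - u / x) ^ r) atTop (𝓝 1) := by
      simpa using ((tendsto_const_nhds.div_atTop tendsto_id).const_sub 1).rpow_const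
        (p := r) (Or.inr hr)
    refine (tendsto_congr' ?_).2 (by simpa using hfactor.const_mul (g u))
    filter_upwards [eventually_ge_atTop u] with x hx
    exact indicator_of_mem (show u ∈ Ioc 0 x from ⟨hu, hx⟩) _

theorem rpow_mul_hyp2F1_neg_eq_setIntegral {x : ℝ} (hx : 0 < x) (a b c : ℝ) :
    x ^ b * hyp2F1 a b c (-x) = Real.Gamma c / (Real.Gamma b * Real.Gamma (c - b)) *
      ∫ u in Ioc 0 x, u ^ (b - 1) * (1 + u) ^ (-a) * (1 - u / x) ^ (c - b - 1) := by
  set h : ℝ → ℝ := fun u => u ^ (b - 1) * (1 + u) ^ (-a) * (1 - u / x) ^ (c - b - 1)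
  have hsubst : ∀ t ∈ uIcc (0 : ℝ) 1,
      t ^ (b - 1) * (1 - t) ^ (c - b - 1) * (1 - -x * t) ^ (-a) = x ^ (1 - b) * h (x * t) := by
    intro t ht
    rw [uIcc_of_le zero_le_one] at ht
    simp only [h]
    have hcancel : x ^ (1 - b) * x ^ (b - 1) = 1 := by
      rw [← Real.rpow_add hx, sub_add_sub_cancel', sub_self, Real.rpow_zero]
    rw [Real.mul_rpow hx.le ht.1, mul_div_cancel_left₀ t hx.ne', neg_mul, sub_neg_eq_add]
    linear_combination (-(t ^ (b - 1) * (1 - t) ^ (c - b - 1) * (1 + x * t) ^ (-a))) * hcancel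
  rw [hyp2F1, intervalIntegral.integral_congr hsubst, intervalIntegral.integral_const_mul,
    intervalIntegral.integral_comp_mul_left h hx.ne', mul_zero, mul_one,
    intervalIntegral.integral_of_le hx.le, smul_eq_mul, Real.rpow_sub hx, Real.rpow_one]
  have := (Real.rpow_pos_of_pos hx b).ne'
  field_simp

theorem tendsto_rpow_mul_hyp2F1_neg_atTop {a b c : ℝ} (hb : 0 < b) (hba : b < a)
    (hbc : b + 1 ≤ c) :
    Tendsto (fun x => x ^ b * hyp2F1 a b c (-x)) atTop
      (𝓝 (Real.Gamma c * Real.Gamma (a - b) / (Real.Gamma a * Real.Gamma (c - b)))) := by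
  have hbeta := Real.integral_Ioi_rpow_mul_one_add_rpow hb (sub_pos.2 hba)
  have hint := Real.integrableOn_Ioi_rpow_mul_one_add_rpow hb (sub_pos.2 hba)
  rw [add_sub_cancel] at hbeta hint
  have hlim := (tendsto_setIntegral_Ioc_mul_one_sub_div_rpow hint
    (by linarith : 0 ≤ c - b - 1)).const_mul (Real.Gamma c / (Real.Gamma b * Real.Gamma (c - b)))
  rw [hbeta] at hlim
  have hΓb := (Real.Gamma_pos_of_pos hb).ne'
  convert hlim.congr' ?_ using 2
  · field_simp
  · filter_upwards [eventually_gt_atTop 0] with x hx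
    exact (rpow_mul_hyp2F1_neg_eq_setIntegral hx a b c).symm

open Real

noncomputable def gubserViscousProfile (ρ : ℝ) : ℝ :=
  sinh ρ ^ 3 / cosh ρ ^ ((2 : ℝ) / 3) * hyp2F1 (3 / 2) (7 / 6) (5 / 2) (-(sinh ρ ^ 2))

theorem gubserViscousProfile_neg (ρ : ℝ) :
    gubserViscousProfile (-ρ) = -gubserViscousProfile ρ := by
  simp only [gubserViscousProfile, sinh_neg, cosh_neg, even_two.neg_pow,
    Odd.neg_pow (by decide : Odd 3)]
  ring

theorem gubser_Gamma_ratio :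
    Gamma (5 / 2) * Gamma (3 / 2 - 7 / 6) / (Gamma (3 / 2) * Gamma (5 / 2 - 7 / 6)) = 9 / 2 := by
  have h52 : Gamma (5 / 2) = 3 / 2 * Gamma (3 / 2) := by
    rw [show (5 / 2 : ℝ) = 3 / 2 + 1 by norm_num, Gamma_add_one (by norm_num)]
  have h43 : Gamma (5 / 2 - 7 / 6) = 1 / 3 * Gamma (3 / 2 - 7 / 6) := by
    rw [show (5 / 2 - 7 / 6 : ℝ) = 3 / 2 - 7 / 6 + 1 by norm_num, Gamma_add_one (by norm_num)]
    norm_num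
  have := (Gamma_pos_of_pos (by norm_num : (0 : ℝ) < 3 / 2)).ne'
  have := (Gamma_pos_of_pos (by norm_num : (0 : ℝ) < 3 / 2 - 7 / 6)).ne'
  rw [h52, h43]
  field_simp
  norm_num

theorem tendsto_gubserViscousProfile_atTop :
    Tendsto gubserViscousProfile atTop (𝓝 (9 / 2)) := by
  have hF := (tendsto_rpow_mul_hyp2F1_neg_atTop (a := 3 / 2) (b := 7 / 6) (c := 5 / 2)
    (by norm_num) (by norm_num) (by norm_num)).comp
      ((tendsto_pow_atTop two_ne_zero).comp tendsto_sinh_atTop)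
  rw [gubser_Gamma_ratio] at hF
  have hw : Tendsto (fun ρ => (1 - (cosh ρ ^ 2)⁻¹) ^ ((1 : ℝ) / 3)) atTop (𝓝 1) := by
    simpa using (((tendsto_pow_atTop two_ne_zero).comp tendsto_cosh_atTop).inv_tendsto_atTop
      |>.const_sub 1).rpow_const (p := (1 : ℝ) / 3) (Or.inr (by norm_num))
  rw [← one_mul (9 / 2 : ℝ)]
  refine (hw.mul hF).congr' ?_
  filter_upwards [eventually_ge_atTop 0] with ρ hρ
  simp only [gubserViscousProfile, sinh_pow_three_div_cosh_rpow hρ, Function.comp_apply, mul_assoc]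

theorem tendsto_gubserViscousProfile_atBot :
    Tendsto gubserViscousProfile atBot (𝓝 (-(9 / 2))) := by
  simpa [Function.comp_def, gubserViscousProfile_neg] using
    tendsto_gubserViscousProfile_atTop.neg.comp tendsto_neg_atBot_atTop

theorem tendsto_const_div_cosh_rpow {l : Filter ℝ} (hl : Tendsto cosh l atTop) (T : ℝ) :
    Tendsto (fun ρ => T / cosh ρ ^ ((2 : ℝ) / 3)) l (𝓝 0) :=
  tendsto_const_nhds.div_atTop ((tendsto_rpow_atTop (by norm_num)).comp hl)

/-- The Navier–Stokes Gubser temperature profile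
`T̂_NS(ρ) = T₀ cosh^{-2/3}ρ + (4η̄/27) sinh³ρ cosh^{-2/3}ρ ₂F₁(3/2,7/6;5/2;-sinh²ρ)`
tends to `±2η̄/3` as `ρ → ±∞`; in particular for any `η̄ > 0` and any `T₀`
there is a `ρ` where the temperature is negative. -/
theorem stmt12_gubser_NS_negative_temperature
    (T0 ηb : ℝ) (hη : 0 < ηb) :
    let TNS : ℝ → ℝ := fun ρ =>
      T0 / Real.cosh ρ ^ ((2 : ℝ) / 3)
        + 4 * ηb / 27 * (Real.sinh ρ ^ 3 / Real.cosh ρ ^ ((2 : ℝ) / 3))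
            * hyp2F1 (3 / 2) (7 / 6) (5 / 2) (-(Real.sinh ρ ^ 2))
    Tendsto TNS atTop (nhds (2 * ηb / 3)) ∧
    Tendsto TNS atBot (nhds (-(2 * ηb / 3))) ∧
    ∃ ρ : ℝ, TNS ρ < 0 := by
  intro TNS
  have hTNS : TNS = fun ρ =>
      T0 / cosh ρ ^ ((2 : ℝ) / 3) + 4 * ηb / 27 * gubserViscousProfile ρ := by
    funext ρ
    simp only [TNS, gubserViscousProfile, mul_assoc]
  have hTop : Tendsto TNS atTop (𝓝 (2 * ηb / 3)) := by
    rw [hTNS]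
    convert (tendsto_const_div_cosh_rpow tendsto_cosh_atTop T0).add
      (tendsto_gubserViscousProfile_atTop.const_mul (4 * ηb / 27)) using 2
    ring
  have hBot : Tendsto TNS atBot (𝓝 (-(2 * ηb / 3))) := by
    rw [hTNS]
    convert (tendsto_const_div_cosh_rpow tendsto_cosh_atBot T0).add
      (tendsto_gubserViscousProfile_atBot.const_mul (4 * ηb / 27)) using 2
    ring
  exact ⟨hTop, hBot, (hBot.eventually_lt_const (by linarith)).exists⟩
end
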